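/- Let ν, λ > 0, let A be the operator on ℓ²(ℤ,ℝ) given by (Au)_i = −u_{i−1} + 2u_i − u_{i+1}, let g ∈ ℓ²(ℤ,ℝ), and let f : ℝ → ℝ be continuously differentiable with f(0) = 0 and (f(x) − f(y))(x − y) ≥ 0 for all x,y ∈ ℝ. Let T > 0, let w : [0,T] → ℓ²(ℤ,ℝ) be continuous, and suppose u¹, u² : [0,T] → ℓ²(ℤ,ℝ) are continuous functions satisfying, for k = 1,2 and all t ∈ [0,T], u^k(t) = u^k(0) + ∫₀ᵗ ( −νAu^k(s) − λu^k(s) − f̃(u^k(s)) + g ) ds + w(t), where f̃ is the Nemytskii operator of f. Then for all t ∈ [0,T]: ‖u¹(t) − u²(t)‖ ≤ ‖u¹(0) − u²(0)‖. In particular, if u¹(0) = u²(0) then u¹ ≡ u², so the solution is unique and depends continuously on the initial data. -/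

import Mathlib

noncomputable section

open Set intervalIntegral

/-- The real Hilbert space `ℓ²(ℤ, ℝ)` of square-summable sequences indexed by `ℤ`. -/
abbrev l2Z : Type := lp (fun _ : ℤ => ℝ) 2

/-!
The difference `e = u¹ - u²` of two solutions no longer sees `g` or `w`, and satisfies
`e' = -ν A e - λ e - (f̃(u¹) - f̃(u²))`. Summation by parts gives `⟪A e, e⟫ = ∑ (eᵢ - eᵢ₊₁)² ≥ 0`,
and monotonicity of `f` makes `⟪f̃(u¹) - f̃(u²), e⟫ ≥ 0`; hence `d/dt ‖e‖² = 2⟪e', e⟫ ≤ 0`.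
Continuity of the drift, needed for the fundamental theorem of calculus, comes from `f` being
`C¹`, hence Lipschitz on bounded sets, so that `f̃` is Lipschitz on balls of `ℓ²`.
-/

open scoped RealInnerProductSpace

section Dissipative

variable {E : Type*} [NormedAddCommGroup E] [InnerProductSpace ℝ E]

theorem antitoneOn_norm_of_inner_deriv_nonpos {e e' : ℝ → E} {a b : ℝ}
    (he : ContinuousOn e (Icc a b)) (hderiv : ∀ t ∈ Ioo a b, HasDerivAt e (e' t) t)
    (hdiss : ∀ t ∈ Ioo a b, ⟪e t, e' t⟫ ≤ 0) :
    AntitoneOn (fun t => ‖e t‖) (Icc a b) := by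
  have hsq : AntitoneOn (fun t => ‖e t‖ ^ 2) (Icc a b) := by
    refine antitoneOn_of_hasDerivWithinAt_nonpos (f' := fun t => 2 * ⟪e t, e' t⟫) (convex_Icc a b)
      (he.norm.pow 2) (fun t ht => ?_) (fun t ht => ?_)
    · rw [interior_Icc] at ht
      exact (hderiv t ht).norm_sq.hasDerivWithinAt
    · rw [interior_Icc] at ht
      linarith [hdiss t ht]
  intro s hs t ht hst
  exact (pow_le_pow_iff_left₀ (norm_nonneg _) (norm_nonneg _) two_ne_zero).1 (hsq hs ht hst)

theorem hasDerivAt_of_eq_add_integral [CompleteSpace E] {e G : ℝ → E} {a b t : ℝ}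
    (hG : ContinuousOn G (Icc a b)) (heq : ∀ s ∈ Icc a b, e s = e a + ∫ r in a..s, G r)
    (ht : t ∈ Ioo a b) : HasDerivAt e (G t) t := by
  have hint : HasDerivAt (fun s => ∫ r in a..s, G r) (G t) t :=
    integral_hasDerivAt_right
      ((hG.mono (Icc_subset_Icc le_rfl ht.2.le)).intervalIntegrable_of_Icc ht.1.le)
      ((hG.mono Ioo_subset_Icc_self).stronglyMeasurableAtFilter isOpen_Ioo t ht)
      (hG.continuousAt (Icc_mem_nhds ht.1 ht.2))
  refine (hint.const_add (e a)).congr_of_eventuallyEq ?_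
  filter_upwards [Icc_mem_nhds ht.1 ht.2] with s hs using heq s hs

theorem inner_drift_sub_nonpos {A : E →L[ℝ] E} (hA : ∀ v, 0 ≤ ⟪A v, v⟫) {F : E → E}
    (hF : ∀ a b, 0 ≤ ⟪F a - F b, a - b⟫) {ν lam : ℝ} (hν : 0 ≤ ν) (hlam : 0 ≤ lam) (g a b : E) :
    ⟪(-(ν • A a) - lam • a - F a + g) - (-(ν • A b) - lam • b - F b + g), a - b⟫ ≤ 0 := by
  have hdiff : (-(ν • A a) - lam • a - F a + g) - (-(ν • A b) - lam • b - F b + g)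
      = -(ν • A (a - b)) - lam • (a - b) - (F a - F b) := by
    simp only [map_sub, smul_sub]
    abel
  rw [hdiff, inner_sub_left, inner_sub_left, inner_neg_left, real_inner_smul_left,
    real_inner_smul_left]
  nlinarith [hA (a - b), hF a b, real_inner_self_nonneg (x := a - b)]

theorem norm_sub_le_of_dissipative [CompleteSpace E] {Φ : E → E} (hΦ : Continuous Φ)
    (hdiss : ∀ a b, ⟪Φ a - Φ b, a - b⟫ ≤ 0) {w u₁ u₂ : ℝ → E} {T : ℝ}
    (hu₁c : ContinuousOn u₁ (Icc 0 T)) (hu₂c : ContinuousOn u₂ (Icc 0 T))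
    (hu₁ : ∀ t ∈ Icc (0 : ℝ) T, u₁ t = u₁ 0 + (∫ s in (0 : ℝ)..t, Φ (u₁ s)) + w t)
    (hu₂ : ∀ t ∈ Icc (0 : ℝ) T, u₂ t = u₂ 0 + (∫ s in (0 : ℝ)..t, Φ (u₂ s)) + w t) :
    ∀ t ∈ Icc (0 : ℝ) T, ‖u₁ t - u₂ t‖ ≤ ‖u₁ 0 - u₂ 0‖ := by
  have hΦu₁ : ContinuousOn (fun s => Φ (u₁ s)) (Icc 0 T) := hΦ.comp_continuousOn hu₁c
  have hΦu₂ : ContinuousOn (fun s => Φ (u₂ s)) (Icc 0 T) := hΦ.comp_continuousOn hu₂c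
  have heq : ∀ t ∈ Icc (0 : ℝ) T,
      (u₁ - u₂) t = (u₁ - u₂) 0 + ∫ s in (0 : ℝ)..t, (Φ (u₁ s) - Φ (u₂ s)) := by
    intro t ht
    have hsub : Icc 0 t ⊆ Icc 0 T := Icc_subset_Icc le_rfl ht.2
    rw [integral_sub ((hΦu₁.mono hsub).intervalIntegrable_of_Icc ht.1)
      ((hΦu₂.mono hsub).intervalIntegrable_of_Icc ht.1), Pi.sub_apply, Pi.sub_apply,
      hu₁ t ht, hu₂ t ht]
    abel
  have hanti := antitoneOn_norm_of_inner_deriv_nonpos (hu₁c.sub hu₂c)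
    (fun t ht => hasDerivAt_of_eq_add_integral (hΦu₁.sub hΦu₂) heq ht)
    (fun t _ => by rw [real_inner_comm]; exact hdiss _ _)
  exact fun t ht => hanti ⟨le_rfl, ht.1.trans ht.2⟩ ht ht.1

end Dissipative

section Nemytskii

variable {ι : Type*}

theorem lp.real_inner_eq_tsum (x y : lp (fun _ : ι => ℝ) 2) : ⟪x, y⟫ = ∑' i, x i * y i := by
  simp only [lp.inner_eq_tsum, RCLike.inner_apply, conj_trivial]
  exact tsum_congr fun i => mul_comm _ _

theorem lp.summable_real_mul (x y : lp (fun _ : ι => ℝ) 2) : Summable fun i => x i * y i := by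
  simpa only [RCLike.inner_apply, conj_trivial, mul_comm (y _)] using lp.summable_inner (𝕜 := ℝ) x y

theorem lp.norm_le_mul_norm_of_forall_abs_le {x y : lp (fun _ : ι => ℝ) 2} {K : ℝ} (hK : 0 ≤ K)
    (h : ∀ i, |x i| ≤ K * |y i|) : ‖x‖ ≤ K * ‖y‖ := by
  have hterm : ∀ i, x i * x i ≤ K ^ 2 * (y i * y i) := fun i => by
    nlinarith [abs_mul_abs_self (x i), abs_mul_abs_self (y i), h i, abs_nonneg (x i)]
  have hsq : ‖x‖ ^ 2 ≤ (K * ‖y‖) ^ 2 := by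
    rw [mul_pow, ← real_inner_self_eq_norm_sq, ← real_inner_self_eq_norm_sq,
      lp.real_inner_eq_tsum, lp.real_inner_eq_tsum, ← tsum_mul_left]
    exact (lp.summable_real_mul x x).tsum_le_tsum hterm ((lp.summable_real_mul y y).mul_left _)
  exact (pow_le_pow_iff_left₀ (norm_nonneg _) (by positivity) two_ne_zero).1 hsq

variable {f : ℝ → ℝ} {F : lp (fun _ : ι => ℝ) 2 → lp (fun _ : ι => ℝ) 2}

theorem inner_nemytskii_sub_nonneg (hmono : ∀ x y : ℝ, 0 ≤ (f x - f y) * (x - y))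
    (hF : ∀ u i, F u i = f (u i)) (a b : lp (fun _ : ι => ℝ) 2) : 0 ≤ ⟪F a - F b, a - b⟫ := by
  rw [lp.real_inner_eq_tsum]
  refine tsum_nonneg fun i => ?_
  simpa only [lp.coeFn_sub, Pi.sub_apply, hF] using hmono (a i) (b i)

theorem lipschitzOnWith_nemytskii {K : NNReal} {R : ℝ} (hf : LipschitzOnWith K f (Icc (-R) R))
    (hF : ∀ u i, F u i = f (u i)) : LipschitzOnWith K F (Metric.closedBall 0 R) := by
  have hmem : ∀ u ∈ Metric.closedBall (0 : lp (fun _ : ι => ℝ) 2) R, ∀ i, u i ∈ Icc (-R) R :=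
    fun u hu i => abs_le.1 <|
      (lp.norm_apply_le_norm two_ne_zero u i).trans (mem_closedBall_zero_iff.1 hu)
  refine LipschitzOnWith.of_dist_le_mul fun a ha b hb => ?_
  rw [dist_eq_norm, dist_eq_norm]
  refine lp.norm_le_mul_norm_of_forall_abs_le K.2 fun i => ?_
  simpa only [lp.coeFn_sub, Pi.sub_apply, hF, ← Real.dist_eq] using
    hf.dist_le_mul _ (hmem a ha i) _ (hmem b hb i)

theorem continuous_nemytskii (hf : ContDiff ℝ 1 f) (hF : ∀ u i, F u i = f (u i)) :
    Continuous F := by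
  refine continuous_iff_continuousAt.2 fun x => ?_
  obtain ⟨K, hK⟩ := hf.contDiffOn.exists_lipschitzOnWith one_ne_zero
    (convex_Icc (-(‖x‖ + 1)) (‖x‖ + 1)) isCompact_Icc
  exact (lipschitzOnWith_nemytskii hK hF).continuousOn.continuousAt
    (Metric.closedBall_mem_nhds_of_mem (by simp))

end Nemytskii

section DiscreteLaplacian

theorem summable_mul_shift_of_summable_sq {v : ℤ → ℝ} (hv : Summable fun i => v i ^ 2) :
    Summable fun i => v i * v (i + 1) := by
  have hv' : Summable fun i => v (i + 1) ^ 2 := (Equiv.addRight (1 : ℤ)).summable_iff.2 hv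
  refine Summable.of_norm_bounded (hv.add hv') fun i => ?_
  rw [Real.norm_eq_abs, abs_mul]
  nlinarith [sq_abs (v i), sq_abs (v (i + 1)), sq_nonneg (|v i| - |v (i + 1)|)]

theorem hasSum_discreteLaplacian_mul_self {v : ℤ → ℝ} (hv : Summable fun i => v i ^ 2) :
    HasSum (fun i => (-v (i - 1) + 2 * v i - v (i + 1)) * v i) (∑' i, (v i - v (i + 1)) ^ 2) := by
  obtain ⟨S, hS⟩ := hv
  obtain ⟨P, hP⟩ := summable_mul_shift_of_summable_sq ⟨S, hS⟩
  have hS' : HasSum (fun i => v (i + 1) ^ 2) S := (Equiv.addRight (1 : ℤ)).hasSum_iff.2 hS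
  have hP' : HasSum (fun i => v (i - 1) * v i) P := by
    simpa only [Function.comp_def, Equiv.subRight_apply, sub_add_cancel] using
      (Equiv.subRight (1 : ℤ)).hasSum_iff.2 hP
  have hlap : HasSum (fun i => (-v (i - 1) + 2 * v i - v (i + 1)) * v i) (2 * S - P - P) :=
    ((hS.mul_left 2).sub hP').sub hP |>.congr_fun fun i => by ring
  have hdiff : HasSum (fun i => (v i - v (i + 1)) ^ 2) (S + S - 2 * P) :=
    ((hS.add hS').sub (hP.mul_left 2)).congr_fun fun i => by ring
  rw [hdiff.tsum_eq]
  convert hlap using 1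
  ring

theorem inner_discreteLaplacian_self_nonneg {A : l2Z →L[ℝ] l2Z}
    (hA : ∀ (u : l2Z) (i : ℤ), A u i = -u (i - 1) + 2 * u i - u (i + 1)) (v : l2Z) :
    0 ≤ ⟪A v, v⟫ := by
  have hv : Summable fun i => v i ^ 2 := (lp.summable_real_mul v v).congr fun i => (sq _).symm
  rw [lp.real_inner_eq_tsum, tsum_congr fun i => by rw [hA],
    (hasSum_discreteLaplacian_mul_self hv).tsum_eq]
  exact tsum_nonneg fun i => sq_nonneg _

end DiscreteLaplacian

theorem lattice_solutions_contraction_general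
    (ν lam : ℝ) (hν : 0 < ν) (hlam : 0 < lam)
    (A : l2Z →L[ℝ] l2Z)
    (hA : ∀ (u : l2Z) (i : ℤ), A u i = -u (i - 1) + 2 * u i - u (i + 1))
    (g : l2Z)
    (f : ℝ → ℝ) (hf : ContDiff ℝ 1 f)
    (hmono : ∀ x y : ℝ, 0 ≤ (f x - f y) * (x - y))
    (F : l2Z → l2Z) (hF : ∀ (u : l2Z) (i : ℤ), F u i = f (u i))
    (T : ℝ)
    (w : ℝ → l2Z)
    (u1 u2 : ℝ → l2Z)
    (hu1c : ContinuousOn u1 (Icc 0 T)) (hu2c : ContinuousOn u2 (Icc 0 T))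
    (hu1 : ∀ t ∈ Icc (0 : ℝ) T,
      u1 t = u1 0 + (∫ s in (0 : ℝ)..t,
        (-(ν • A (u1 s)) - lam • u1 s - F (u1 s) + g)) + w t)
    (hu2 : ∀ t ∈ Icc (0 : ℝ) T,
      u2 t = u2 0 + (∫ s in (0 : ℝ)..t,
        (-(ν • A (u2 s)) - lam • u2 s - F (u2 s) + g)) + w t) :
    (∀ t ∈ Icc (0 : ℝ) T, ‖u1 t - u2 t‖ ≤ ‖u1 0 - u2 0‖) ∧
    (u1 0 = u2 0 → ∀ t ∈ Icc (0 : ℝ) T, u1 t = u2 t) := by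
  have hFc : Continuous F := continuous_nemytskii hf hF
  have hdrift : Continuous fun v => -(ν • A v) - lam • v - F v + g := by fun_prop
  have hcontr := norm_sub_le_of_dissipative hdrift
    (inner_drift_sub_nonpos (inner_discreteLaplacian_self_nonneg hA)
      (inner_nemytskii_sub_nonneg hmono hF) hν.le hlam.le g) hu1c hu2c hu1 hu2
  refine ⟨hcontr, fun h0 t ht => sub_eq_zero.1 (norm_le_zero_iff.1 ?_)⟩
  simpa [h0] using hcontr t ht

/-- **contraction in the initial data.** If `u¹, u²` are
continuous solutions of
`u(t) = u(0) + ∫₀ᵗ (−νAu − λu − f̃(u) + g) ds + w(t)` on `[0,T]`, with `f`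
monotone and `f(0) = 0`, then `‖u¹(t) − u²(t)‖ ≤ ‖u¹(0) − u²(0)‖` for all
`t ∈ [0,T]`; in particular, equal initial data force `u¹ = u²` on `[0,T]`. -/
theorem lattice_solutions_contraction
    (ν lam : ℝ) (hν : 0 < ν) (hlam : 0 < lam)
    (A : l2Z →L[ℝ] l2Z)
    (hA : ∀ (u : l2Z) (i : ℤ), A u i = -u (i - 1) + 2 * u i - u (i + 1))
    (g : l2Z)
    (f : ℝ → ℝ) (hf : ContDiff ℝ 1 f) (hf0 : f 0 = 0)
    (hmono : ∀ x y : ℝ, 0 ≤ (f x - f y) * (x - y))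
    (F : l2Z → l2Z) (hF : ∀ (u : l2Z) (i : ℤ), F u i = f (u i))
    (T : ℝ) (hT : 0 < T)
    (w : ℝ → l2Z) (hw : ContinuousOn w (Icc 0 T))
    (u1 u2 : ℝ → l2Z)
    (hu1c : ContinuousOn u1 (Icc 0 T)) (hu2c : ContinuousOn u2 (Icc 0 T))
    (hu1 : ∀ t ∈ Icc (0 : ℝ) T,
      u1 t = u1 0 + (∫ s in (0 : ℝ)..t,
        (-(ν • A (u1 s)) - lam • u1 s - F (u1 s) + g)) + w t)
    (hu2 : ∀ t ∈ Icc (0 : ℝ) T,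
      u2 t = u2 0 + (∫ s in (0 : ℝ)..t,
        (-(ν • A (u2 s)) - lam • u2 s - F (u2 s) + g)) + w t) :
    (∀ t ∈ Icc (0 : ℝ) T, ‖u1 t - u2 t‖ ≤ ‖u1 0 - u2 0‖) ∧
    (u1 0 = u2 0 → ∀ t ∈ Icc (0 : ℝ) T, u1 t = u2 t) :=
  lattice_solutions_contraction_general ν lam hν hlam A hA g f hf hmono F hF T w u1 u2 hu1c hu2c hu1
    hu2
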